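/- For all m, n ∈ ℕ, all z ∈ ℂ and ρ ∈ ℝ, the complex Hermite polynomial J_{m,n}(·,ρ) satisfies conj(z) · (∂/∂z̄) J_{m,n}(z,ρ) − ρ · (∂/∂z)(∂/∂z̄) J_{m,n}(z,ρ) = n · J_{m,n}(z,ρ). -/

import Mathlib

open MeasureTheory ProbabilityTheory Complex Finset

/-- Itô's complex Hermite polynomial `J_{m,n}(z, ρ)`. -/
noncomputable def complexHermite (m n : ℕ) (z : ℂ) (ρ : ℝ) : ℂ :=
  ∑ k ∈ Finset.range (min m n + 1),
    (-1 : ℂ) ^ k * (Nat.factorial k : ℂ) * (Nat.choose m k : ℂ) * (Nat.choose n k : ℂ) *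
      (ρ : ℂ) ^ k * z ^ (m - k) * (starRingEnd ℂ z) ^ (n - k)

/-- Wirtinger derivative `∂f/∂z = (1/2)(∂f/∂x − i ∂f/∂y)`. -/
noncomputable def wirtingerDeriv (f : ℂ → ℂ) (z : ℂ) : ℂ :=
  (fderiv ℝ f z 1 - Complex.I * fderiv ℝ f z Complex.I) / 2

/-- Conjugate Wirtinger derivative `∂f/∂z̄ = (1/2)(∂f/∂x + i ∂f/∂y)`. -/
noncomputable def wirtingerDerivBar (f : ℂ → ℂ) (z : ℂ) : ℂ :=
  (fderiv ℝ f z 1 + Complex.I * fderiv ℝ f z Complex.I) / 2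

/-!
Termwise differentiation of the monomials `z ^ a * z̄ ^ b`, together with
`(m - k) * C(m, k) = m * C(m - 1, k)`, gives `∂ J_{m,n} = m J_{m-1,n}` and
`∂̄ J_{m,n} = n J_{m,n-1}`; Pascal's rule gives the recurrence
`J_{m,n+1} = z̄ J_{m,n} - m ρ J_{m-1,n}`. Hence
`z̄ ∂̄ J_{m,n} - ρ ∂ ∂̄ J_{m,n} = n (z̄ J_{m,n-1} - m ρ J_{m-1,n-1}) = n J_{m,n}`.
-/

open ComplexConjugate

/-- `v ↦ a v + b v̄`, the real derivative of a function with Wirtinger derivatives `a` and `b`. -/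
noncomputable def wirtingerCLM (a b : ℂ) : ℂ →L[ℝ] ℂ :=
  a • ContinuousLinearMap.id ℝ ℂ + b • Complex.conjCLE.toContinuousLinearMap

@[simp]
lemma wirtingerCLM_apply (a b v : ℂ) : wirtingerCLM a b v = a * v + b * conj v := by
  simp [wirtingerCLM]

lemma wirtingerCLM_sum {ι : Type*} (s : Finset ι) (a b : ι → ℂ) :
    ∑ i ∈ s, wirtingerCLM (a i) (b i) = wirtingerCLM (∑ i ∈ s, a i) (∑ i ∈ s, b i) := by
  simp only [wirtingerCLM, sum_add_distrib, ← sum_smul]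

section Wirtinger

variable {f : ℂ → ℂ} {a b z : ℂ}

lemma HasFDerivAt.wirtingerDeriv_eq (h : HasFDerivAt f (wirtingerCLM a b) z) :
    wirtingerDeriv f z = a := by
  rw [wirtingerDeriv, h.fderiv, wirtingerCLM_apply, wirtingerCLM_apply]
  simp only [map_one, conj_I]
  linear_combination (-(a - b) / 2) * I_sq

lemma HasFDerivAt.wirtingerDerivBar_eq (h : HasFDerivAt f (wirtingerCLM a b) z) :
    wirtingerDerivBar f z = b := by
  rw [wirtingerDerivBar, h.fderiv, wirtingerCLM_apply, wirtingerCLM_apply]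
  simp only [map_one, conj_I]
  linear_combination ((a - b) / 2) * I_sq

lemma wirtingerDeriv_const_mul (c : ℂ) (f : ℂ → ℂ) (z : ℂ) :
    wirtingerDeriv (fun w => c * f w) z = c * wirtingerDeriv f z := by
  have h : fderiv ℝ (fun w => c * f w) = c • fderiv ℝ f := fderiv_const_smul_field (f := f) c
  simp only [wirtingerDeriv, h, Pi.smul_apply, FunLike.coe_smul, smul_eq_mul]
  ring

end Wirtinger

lemma hasFDerivAt_const_mul_pow_mul_conj_pow (c : ℂ) (p q : ℕ) (z : ℂ) :
    HasFDerivAt (fun w => c * w ^ p * conj w ^ q)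
      (wirtingerCLM (c * p * z ^ (p - 1) * conj z ^ q) (c * q * z ^ p * conj z ^ (q - 1))) z := by
  have hz := (hasDerivAt_pow p z).hasFDerivAt.restrictScalars ℝ
  have hconj := ((hasDerivAt_pow q (conj z)).hasFDerivAt.restrictScalars ℝ).comp z
    Complex.conjCLE.hasFDerivAt
  refine ((hz.const_mul c).mul hconj).congr_fderiv ?_
  ext v
  simp only [Function.comp_apply, add_apply, smul_apply, ContinuousLinearMap.comp_apply,
    ContinuousLinearEquiv.coe_coe, ContinuousAlgEquiv.coeCLE_apply, conjCAE_apply,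
    ContinuousLinearMap.coe_restrictScalars', ContinuousLinearMap.toSpanSingleton_apply,
    smul_eq_mul, wirtingerCLM_apply]
  ring

noncomputable def complexHermiteCoeff (m n : ℕ) (ρ : ℝ) (k : ℕ) : ℂ :=
  (-1 : ℂ) ^ k * (Nat.factorial k : ℂ) * (Nat.choose m k : ℂ) * (Nat.choose n k : ℂ) * (ρ : ℂ) ^ k

section ComplexHermite

variable (m n : ℕ) (ρ : ℝ)

lemma complexHermiteCoeff_zero : complexHermiteCoeff m n ρ 0 = 1 := by
  simp [complexHermiteCoeff]

lemma complexHermiteCoeff_eq_zero_of_min_lt {k : ℕ} (hk : min m n < k) :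
    complexHermiteCoeff m n ρ k = 0 := by
  rcases min_lt_iff.mp hk with hm | hn
  · simp [complexHermiteCoeff, Nat.choose_eq_zero_of_lt hm]
  · simp [complexHermiteCoeff, Nat.choose_eq_zero_of_lt hn]

lemma complexHermiteCoeff_comm (k : ℕ) :
    complexHermiteCoeff m n ρ k = complexHermiteCoeff n m ρ k := by
  unfold complexHermiteCoeff
  ring

lemma mul_complexHermiteCoeff_pred_left (k : ℕ) :
    m * complexHermiteCoeff (m - 1) n ρ k = ((m - k : ℕ) : ℂ) * complexHermiteCoeff m n ρ k := by
  have hchoose : (m : ℂ) * (m - 1).choose k = ((m - k : ℕ) : ℂ) * m.choose k := by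
    cases m with
    | zero => simp
    | succ m =>
      exact_mod_cast by rw [Nat.add_sub_cancel, mul_comm, Nat.choose_mul_succ_eq, mul_comm]
  unfold complexHermiteCoeff
  linear_combination (-1 : ℂ) ^ k * k.factorial * n.choose k * (ρ : ℂ) ^ k * hchoose

lemma mul_complexHermiteCoeff_pred_right (k : ℕ) :
    n * complexHermiteCoeff m (n - 1) ρ k = ((n - k : ℕ) : ℂ) * complexHermiteCoeff m n ρ k := by
  rw [complexHermiteCoeff_comm m, complexHermiteCoeff_comm m, mul_complexHermiteCoeff_pred_left]

lemma complexHermiteCoeff_succ_right_succ (k : ℕ) :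
    complexHermiteCoeff m (n + 1) ρ (k + 1) =
      complexHermiteCoeff m n ρ (k + 1) - m * ρ * complexHermiteCoeff (m - 1) n ρ k := by
  have hchoose : ((k : ℂ) + 1) * m.choose (k + 1) = m * (m - 1).choose k := by
    cases m with
    | zero => simp
    | succ m => exact_mod_cast by rw [Nat.add_sub_cancel, Nat.add_one_mul_choose_eq, mul_comm]
  unfold complexHermiteCoeff
  rw [Nat.choose_succ_succ', Nat.factorial_succ]
  push_cast
  linear_combination (-(-1 : ℂ) ^ k * k.factorial * n.choose k * (ρ : ℂ) ^ (k + 1)) * hchoose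

variable {m n} in
lemma complexHermite_eq_sum_range {N : ℕ} (hN : min m n < N) (z : ℂ) :
    complexHermite m n z ρ =
      ∑ k ∈ range N, complexHermiteCoeff m n ρ k * z ^ (m - k) * conj z ^ (n - k) := by
  refine sum_subset (range_subset_range.mpr hN) fun k _ hk => ?_
  change complexHermiteCoeff m n ρ k * _ * _ = 0
  rw [complexHermiteCoeff_eq_zero_of_min_lt m n ρ (by rw [mem_range] at hk; omega), zero_mul,
    zero_mul]

lemma hasFDerivAt_complexHermite (z : ℂ) :
    HasFDerivAt (fun w => complexHermite m n w ρ)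
      (wirtingerCLM (m * complexHermite (m - 1) n z ρ) (n * complexHermite m (n - 1) z ρ)) z := by
  have hN {a b : ℕ} (ha : a ≤ m) (hb : b ≤ n) : min a b < m + n + 1 := by omega
  have hJ : (fun w => complexHermite m n w ρ) = fun w =>
      ∑ k ∈ range (m + n + 1), complexHermiteCoeff m n ρ k * w ^ (m - k) * conj w ^ (n - k) :=
    funext (complexHermite_eq_sum_range ρ (hN le_rfl le_rfl))
  rw [hJ, complexHermite_eq_sum_range ρ (hN (Nat.sub_le m 1) le_rfl),
    complexHermite_eq_sum_range ρ (hN le_rfl (Nat.sub_le n 1)), mul_sum, mul_sum,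
    ← wirtingerCLM_sum]
  refine HasFDerivAt.fun_sum fun k _ => ?_
  refine (hasFDerivAt_const_mul_pow_mul_conj_pow _ (m - k) (n - k) z).congr_fderiv ?_
  congr 1
  · rw [← mul_assoc, ← mul_assoc, mul_complexHermiteCoeff_pred_left, Nat.sub_right_comm]
    ring
  · rw [← mul_assoc, ← mul_assoc, mul_complexHermiteCoeff_pred_right, Nat.sub_right_comm n]
    ring

lemma wirtingerDeriv_complexHermite (z : ℂ) :
    wirtingerDeriv (fun w => complexHermite m n w ρ) z = m * complexHermite (m - 1) n z ρ :=
  (hasFDerivAt_complexHermite m n ρ z).wirtingerDeriv_eq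

lemma wirtingerDerivBar_complexHermite (z : ℂ) :
    wirtingerDerivBar (fun w => complexHermite m n w ρ) z = n * complexHermite m (n - 1) z ρ :=
  (hasFDerivAt_complexHermite m n ρ z).wirtingerDerivBar_eq

lemma complexHermite_succ_right (z : ℂ) :
    complexHermite m (n + 1) z ρ =
      conj z * complexHermite m n z ρ - m * ρ * complexHermite (m - 1) n z ρ := by
  have hterm : ∀ k ∈ range (n + 1),
      complexHermiteCoeff m (n + 1) ρ (k + 1) * z ^ (m - (k + 1)) * conj z ^ (n + 1 - (k + 1)) =
        conj z * (complexHermiteCoeff m n ρ (k + 1) * z ^ (m - (k + 1)) * conj z ^ (n - (k + 1)))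
          - m * ρ * (complexHermiteCoeff (m - 1) n ρ k * z ^ (m - 1 - k) * conj z ^ (n - k)) := by
    intro k hk
    rw [complexHermiteCoeff_succ_right_succ, Nat.add_sub_add_right, Nat.sub_sub m 1 k, add_comm 1 k]
    obtain hkn | rfl : k < n ∨ k = n := by rw [mem_range] at hk; omega
    · rw [show n - k = n - (k + 1) + 1 by omega, pow_succ]
      ring
    · -- the exponent `n - (n + 1)` truncates to `0`, but its coefficient vanishes
      rw [complexHermiteCoeff_eq_zero_of_min_lt m k ρ (by omega)]
      ring
  rw [complexHermite_eq_sum_range ρ (N := n + 2) (by omega) z,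
    complexHermite_eq_sum_range ρ (N := n + 2) (by omega) z,
    complexHermite_eq_sum_range ρ (N := n + 1) (by omega) z, sum_range_succ',
    sum_range_succ' _ (n + 1), sum_congr rfl hterm, sum_sub_distrib, ← mul_sum, ← mul_sum]
  simp only [complexHermiteCoeff_zero, Nat.sub_zero, pow_succ]
  ring

end ComplexHermite

/-- Eigenfunction property for the conjugate complex Ornstein–Uhlenbeck operator:
`conj z·∂_z̄ J_{m,n} − ρ·∂_z ∂_z̄ J_{m,n} = n·J_{m,n}`. -/
theorem complexHermite_conj_OU_eigenfunction (m n : ℕ) (z : ℂ) (ρ : ℝ) :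
    (starRingEnd ℂ z) * wirtingerDerivBar (fun w => complexHermite m n w ρ) z
      - (ρ : ℂ) * wirtingerDeriv (fun w => wirtingerDerivBar (fun v => complexHermite m n v ρ) w) z
      = (n : ℂ) * complexHermite m n z ρ := by
  simp only [wirtingerDerivBar_complexHermite, wirtingerDeriv_const_mul,
    wirtingerDeriv_complexHermite]
  cases n with
  | zero => simp
  | succ n =>
    rw [Nat.add_sub_cancel, complexHermite_succ_right]
    push_cast
    ring
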